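/- arXiv:1509.01372 — 2 statements merged into one kernel-verified Lean document; each statement's English description precedes it below -/
import Mathlib

section
/- For G = ℤ with generating set {1}, F_ℤ(n) ≈ log n: specifically, for every nonzero integer g with |g| ≤ n there is a normal subgroup kℤ with g ∉ kℤ and k ≤ C·log n for some absolute constant C (for n large), and conversely for each n there exists g with |g| ≤ n such that every proper quotient ℤ/kℤ with g ∉ kℤ has k ≥ c·log n for some absolute constant c > 0. -/
/-!
If every `k ≤ m` divides `g ≠ 0`, then `lcm(1, …, m) ∣ g`; since `2 ^ m ≤ (m + 1) lcm(1, …, m)`,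
this forces `m = O(log |g|)`. Conversely `g = lcm(1, …, m)` is divisible by every `k ≤ m`, and
Chebyshev's bound `log lcm(1, …, m) = ψ(m) = O(m)` lets us take `m` of order `log n` with `g ≤ n`.
-/

open Real Chebyshev

namespace Nat

theorem dvd_lcmUpto {k m : ℕ} (hk : 1 ≤ k) (hkm : k ≤ m) : k ∣ lcmUpto m :=
  Finset.dvd_lcm (Finset.mem_Icc.mpr ⟨hk, hkm⟩)

theorem lt_of_not_dvd_lcmUpto {k m : ℕ} (hk : 1 ≤ k) (h : ¬ k ∣ lcmUpto m) : m < k :=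
  lt_of_not_ge fun hkm => h (dvd_lcmUpto hk hkm)

theorem exists_not_dvd_of_lt_lcmUpto {a m : ℕ} (ha : a ≠ 0) (h : a < lcmUpto m) :
    ∃ k, 1 ≤ k ∧ k ≤ m ∧ ¬ k ∣ a := by
  by_contra! hdvd
  have : lcmUpto m ∣ a :=
    Finset.lcm_dvd fun k hk => hdvd k (Finset.mem_Icc.1 hk).1 (Finset.mem_Icc.1 hk).2
  exact h.not_ge (le_of_dvd (pos_of_ne_zero ha) this)

theorem lt_lcmUpto_three_mul_log (n : ℕ) : n < lcmUpto (3 * (Nat.log 2 n + 1)) := by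
  set L := Nat.log 2 n + 1
  have hn : n < 2 ^ L := lt_pow_succ_log_self one_lt_two n
  have hbernoulli : 3 * L + 1 ≤ 4 ^ L := by
    simpa [add_comm, mul_comm] using one_add_le_pow_of_two_add_nonneg (zero_le (2 + 3)) L
  have : (3 * L + 1) * n < (3 * L + 1) * lcmUpto (3 * L) := calc
    (3 * L + 1) * n < 4 ^ L * 2 ^ L := Nat.mul_lt_mul_of_le_of_lt hbernoulli hn (by omega)
    _ = 2 ^ (3 * L) := by rw [show 4 = 2 ^ 2 by rfl, ← pow_mul, ← pow_add]; ring_nf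
    _ ≤ (3 * L + 1) * lcmUpto (3 * L) := two_pow_le_mul_lcmUpto _
  exact Nat.lt_of_mul_lt_mul_left this

theorem lcmUpto_le_exp (m : ℕ) : (lcmUpto m : ℝ) ≤ exp (7 * m) := by
  have hlog4 : Real.log 4 ≤ 3 := (log_le_sub_one_of_pos (by norm_num)).trans (by norm_num)
  rw [← exp_log (cast_pos.2 (lcmUpto_pos m)), ← psi_eq_log_lcmUpto, exp_le_exp]
  exact (psi_le_const_mul_self (cast_nonneg m)).trans (by gcongr; linarith)

theorem lcmUpto_floor_log_div_le {n : ℕ} (hn : 1 ≤ n) : lcmUpto ⌊Real.log n / 7⌋₊ ≤ n := by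
  have hn' : (0 : ℝ) < n := by exact_mod_cast hn
  have hfloor : 7 * (⌊Real.log n / 7⌋₊ : ℝ) ≤ Real.log n := by
    linarith [floor_le (div_nonneg (Real.log_natCast_nonneg n) (by norm_num : (0 : ℝ) ≤ 7))]
  exact_mod_cast (lcmUpto_le_exp _).trans ((exp_le_exp.2 hfloor).trans (exp_log hn').le)

end Nat

theorem three_mul_natLog_two_add_one_le_eight_mul_log {n : ℕ} (hn : 8 ≤ n) :
    ((3 * (Nat.log 2 n + 1) : ℕ) : ℝ) ≤ 8 * log n := by
  have hlog2 := log_two_gt_d9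
  have hlog_n : 3 * log 2 ≤ log n := by
    rw [← log_rpow two_pos]
    exact log_le_log (by norm_num) (by norm_num; exact_mod_cast hn)
  have hnatLog : (Nat.log 2 n : ℝ) * log 2 ≤ log n := by
    have := natLog_le_logb n 2
    rwa [logb, Nat.cast_ofNat, le_div_iff₀ (by linarith)] at this
  push_cast
  nlinarith

theorem rf_growth_int_log :
    (∃ C : ℝ, 0 < C ∧ ∃ N : ℕ, ∀ n : ℕ, N ≤ n → ∀ g : ℤ, g ≠ 0 → g.natAbs ≤ n →
        ∃ k : ℕ, 1 ≤ k ∧ ¬ ((k : ℤ) ∣ g) ∧ (k : ℝ) ≤ C * Real.log n) ∧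
      (∃ c : ℝ, 0 < c ∧ ∃ N : ℕ, ∀ n : ℕ, N ≤ n → ∃ g : ℤ, g ≠ 0 ∧ g.natAbs ≤ n ∧
        ∀ k : ℕ, 1 ≤ k → ¬ ((k : ℤ) ∣ g) → c * Real.log n ≤ (k : ℝ)) := by
  refine ⟨⟨8, by norm_num, 8, fun n hn g hg hgn => ?_⟩, ⟨1 / 7, by norm_num, 1, fun n hn => ?_⟩⟩
  · obtain ⟨k, hk, hkL, hkg⟩ := Nat.exists_not_dvd_of_lt_lcmUpto (Int.natAbs_ne_zero.2 hg)
      (hgn.trans_lt (Nat.lt_lcmUpto_three_mul_log n))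
    refine ⟨k, hk, Int.natCast_dvd.not.2 hkg, ?_⟩
    exact (Nat.cast_le.2 hkL).trans (three_mul_natLog_two_add_one_le_eight_mul_log hn)
  · refine ⟨Nat.lcmUpto ⌊log n / 7⌋₊, by exact_mod_cast Nat.lcmUpto_ne_zero _,
      Nat.lcmUpto_floor_log_div_le hn, fun k hk hkg => ?_⟩
    have hmk := Nat.lt_of_not_dvd_lcmUpto hk (Int.natCast_dvd_natCast.not.1 hkg)
    have hfloor := Nat.lt_floor_add_one (log n / 7)
    have hmk' : (⌊log n / 7⌋₊ : ℝ) + 1 ≤ k := by exact_mod_cast hmk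
    linarith
end

section
/- Let d ≥ 2 be an integer and G a group acting on the set of vertices of the rooted d-regular tree (finite strings over an alphabet X with |X| = d), level-transitively. Suppose K ≤ G is a subgroup and there exists k ∈ K and a level i ≥ 0 such that k fixes all vertices of level i pointwise but moves some vertex of level i + 1, and suppose that for each j, 1 ≤ j ≤ d, there exists an element k_j ∈ K whose restriction at the j-th vertex of level 1 equals k and which acts trivially outside the subtree below that vertex. Then the index of the level-(i+2) stabilizer satisfies |G : St_G(i+2)| ≥ 2^d. -/
/-!
For `S ⊆ X` let `k_S` be the product of the `k_j` with `j ∈ S`. Since each `k_j` acts as `k`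
below `j` and trivially elsewhere, `k_S` acts as `k` below every `j ∈ S` and trivially below
every `j ∉ S`. If `k` moves the level-`(i+1)` vertex `v`, then `k_S` and `k_T` differ on the
vertex `j v` of level `i + 2` for every `j` in the symmetric difference of `S` and `T`; so the
`2^d` elements `k_S` act differently on level `i + 2`, while `|G : St_G(i+2)|` is the number
of distinct permutations of that level induced by `G`.
-/

/-- The pointwise stabilizer of all vertices of level `m` of the rooted `d`-regular tree,
for a group `G` acting on the tree via `φ`. Vertices are finite strings over `Fin d`. -/
def levelStab {G : Type*} [Group G] {d : ℕ} (φ : G →* Equiv.Perm (List (Fin d)))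
    (m : ℕ) : Subgroup G where
  carrier := {g | ∀ v : List (Fin d), v.length = m → φ g v = v}
  one_mem' := by intro v hv; simp
  mul_mem' := by
    intro a b ha hb v hv
    rw [map_mul]
    simp only [Equiv.Perm.mul_apply]
    rw [hb v hv, ha v hv]
  inv_mem' := by
    intro a ha v hv
    rw [map_inv]
    exact (Equiv.Perm.inv_eq_iff_eq).mpr (ha v hv).symm

instance List.finite_subtype_length_eq (α : Type*) [Finite α] (m : ℕ) :
    Finite {v : List α // v.length = m} :=
  List.Vector.finite

section LevelAction

variable {G : Type*} [Group G] {d : ℕ} (φ : G →* Equiv.Perm (List (Fin d)))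
  (hlen : ∀ (g : G) (v : List (Fin d)), (φ g v).length = v.length)

def levelAction (m : ℕ) : G →* Equiv.Perm {v : List (Fin d) // v.length = m} where
  toFun g := (φ g).subtypePerm fun v => by rw [hlen]
  map_one' := by ext; simp
  map_mul' g h := by ext v : 2; exact DFunLike.congr_fun (map_mul φ g h) v.1

@[simp]
theorem coe_levelAction_apply (m : ℕ) (g : G) (v : {v : List (Fin d) // v.length = m}) :
    (levelAction φ hlen m g v : List (Fin d)) = φ g v :=
  rfl

theorem ker_levelAction (m : ℕ) : (levelAction φ hlen m).ker = levelStab φ m := by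
  ext g
  simp only [MonoidHom.mem_ker, Equiv.ext_iff, Equiv.Perm.coe_one, id_eq, Subtype.ext_iff,
    coe_levelAction_apply]
  exact ⟨fun h v hv => h ⟨v, hv⟩, fun h v => h v.1 v.2⟩

end LevelAction

noncomputable def subtreeProduct {G : Type*} [Group G] {d : ℕ} (kj : Fin d → G)
    (S : Finset (Fin d)) : G :=
  (S.toList.map kj).prod

section SubtreeProduct

variable {G : Type*} [Group G] {d : ℕ} {φ : G →* Equiv.Perm (List (Fin d))} {k : G}
  {kj : Fin d → G}
  (hin : ∀ (j : Fin d) (w : List (Fin d)), φ (kj j) (j :: w) = j :: φ k w)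
  (hout : ∀ (j : Fin d) (v : List (Fin d)), v.head? ≠ some j → φ (kj j) v = v)
include hin hout

theorem apply_cons_prod_map_of_nodup {L : List (Fin d)} (hL : L.Nodup) (j : Fin d)
    (w : List (Fin d)) :
    φ (L.map kj).prod (j :: w) = j :: if j ∈ L then φ k w else w := by
  induction L with
  | nil => simp
  | cons a L ih =>
    rw [List.map_cons, List.prod_cons, map_mul, Equiv.Perm.mul_apply, ih hL.of_cons]
    by_cases hja : j = a
    · subst hja
      simp [hL.notMem, hin]
    · simp [hja, hout a (j :: _) (by simpa using hja)]

theorem apply_cons_subtreeProduct (S : Finset (Fin d)) (j : Fin d) (w : List (Fin d)) :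
    φ (subtreeProduct kj S) (j :: w) = j :: if j ∈ S then φ k w else w := by
  simpa [subtreeProduct] using apply_cons_prod_map_of_nodup hin hout S.nodup_toList j w

theorem injective_levelAction_subtreeProduct
    (hlen : ∀ (g : G) (v : List (Fin d)), (φ g v).length = v.length)
    {v : List (Fin d)} (hkv : φ k v ≠ v) :
    Function.Injective fun S => levelAction φ hlen (v.length + 1) (subtreeProduct kj S) := by
  intro S T hST
  ext j
  have hjv := congrArg (fun σ => (σ ⟨j :: v, rfl⟩ : List (Fin d))) hST
  simp only [coe_levelAction_apply, apply_cons_subtreeProduct hin hout, List.cons.injEq, true_and] at hjv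
  by_cases hS : j ∈ S <;> by_cases hT : j ∈ T <;> simp only [hS, hT, if_true, if_false] at hjv
  · exact iff_of_true hS hT
  · exact absurd hjv hkv
  · exact absurd hjv.symm hkv
  · exact iff_of_false hS hT

end SubtreeProduct

theorem stab_index_lower_bound_general {G : Type*} [Group G] (d : ℕ)
    (φ : G →* Equiv.Perm (List (Fin d)))
    -- the action preserves levels
    (hlen : ∀ (g : G) (v : List (Fin d)), (φ g v).length = v.length)
    (K : Subgroup G) (k : G) (i : ℕ)
    -- k moves some vertex of level i + 1
    (hmove : ∃ v : List (Fin d), v.length = i + 1 ∧ φ k v ≠ v)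
    -- for each j there is an element of K acting as k on the j-th level-one subtree
    -- and trivially elsewhere
    (hcopies : ∀ j : Fin d, ∃ kj ∈ K,
      (∀ w : List (Fin d), φ kj (j :: w) = j :: φ k w) ∧
      (∀ v : List (Fin d), v.head? ≠ some j → φ kj v = v)) :
    2 ^ d ≤ (levelStab φ (i + 2)).index := by
  obtain ⟨v, hv, hkv⟩ := hmove
  choose kj _ hin hout using hcopies
  have hinj := injective_levelAction_subtreeProduct hin hout hlen hkv
  calc 2 ^ d = Nat.card (Finset (Fin d)) := by simp
    _ ≤ Nat.card (levelAction φ hlen (v.length + 1)).range :=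
      Nat.card_le_card_of_injective (fun S => ⟨_, subtreeProduct kj S, rfl⟩)
        fun S T hST => hinj (congrArg Subtype.val hST)
    _ = (levelStab φ (i + 2)).index := by
      rw [← Subgroup.index_ker, ker_levelAction, hv]

theorem stab_index_lower_bound {G : Type*} [Group G] (d : ℕ) (hd : 2 ≤ d)
    (φ : G →* Equiv.Perm (List (Fin d)))
    -- the action preserves levels
    (hlen : ∀ (g : G) (v : List (Fin d)), (φ g v).length = v.length)
    -- the action preserves the tree structure (children go to children)
    (hpref : ∀ (g : G) (v : List (Fin d)) (x : Fin d),
      ∃ y : Fin d, φ g (v ++ [x]) = φ g v ++ [y])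
    -- the action is level transitive
    (htrans : ∀ (m : ℕ) (v w : List (Fin d)), v.length = m → w.length = m →
      ∃ g : G, φ g v = w)
    (K : Subgroup G) (k : G) (hkK : k ∈ K) (i : ℕ)
    -- k fixes all vertices of level i pointwise
    (hfix : k ∈ levelStab φ i)
    -- k moves some vertex of level i + 1
    (hmove : ∃ v : List (Fin d), v.length = i + 1 ∧ φ k v ≠ v)
    -- for each j there is an element of K acting as k on the j-th level-one subtree
    -- and trivially elsewhere
    (hcopies : ∀ j : Fin d, ∃ kj ∈ K,
      (∀ w : List (Fin d), φ kj (j :: w) = j :: φ k w) ∧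
      (∀ v : List (Fin d), v.head? ≠ some j → φ kj v = v)) :
    2 ^ d ≤ (levelStab φ (i + 2)).index :=
  stab_index_lower_bound_general d φ hlen K k i hmove hcopies
end
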